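/- For all a, b ∈ ℝ²: |b − a| ≤ (1 + |b|)·Q(a)·|ν(b) − ν(a)|, where Q(a) = √(1+|a|²) and ν(a) = (−a, 1)/Q(a) ∈ ℝ³. -/

import Mathlib

open Matrix

/-- `Q a = √(1+|a|²)` for `a ∈ ℝ²`. -/
noncomputable def Q2 (a : Fin 2 → ℝ) : ℝ := Real.sqrt (1 + a ⬝ᵥ a)

/-- Euclidean norm of a vector in `ℝⁿ`. -/
noncomputable def enorm2 {n : ℕ} (v : Fin n → ℝ) : ℝ := Real.sqrt (v ⬝ᵥ v)

/-- Upward unit normal `ν(a) = (−a, 1)/Q(a) ∈ ℝ³`. -/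
noncomputable def nuv (a : Fin 2 → ℝ) : Fin 3 → ℝ := (Q2 a)⁻¹ • ![-(a 0), -(a 1), 1]

/-!
Clearing denominators, `Q(a) Q(b) (ν(b) − ν(a)) = (Q(b) a − Q(a) b, Q(a) − Q(b))`, and both
components are bounded by its length `S = Q(a) Q(b) |ν(b) − ν(a)|`. Since
`Q(b) (b − a) = (Q(b) − Q(a)) b − (Q(b) a − Q(a) b)`, the triangle inequality gives
`Q(b) |b − a| ≤ |Q(b) − Q(a)| |b| + |Q(b) a − Q(a) b| ≤ S |b| + S`; dividing by `Q(b)` is the claim.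
-/

lemma norm_smul_sub_add_le {E : Type*} [SeminormedAddCommGroup E] [NormedSpace ℝ E]
    (a b : E) (p : ℝ) {q : ℝ} (hq : 0 ≤ q) :
    q * ‖b - a‖ ≤ ‖q • a - p • b‖ + |p - q| * ‖b‖ := by
  have hsplit : q • (b - a) = (q - p) • b - (q • a - p • b) := by module
  calc q * ‖b - a‖ = ‖q • (b - a)‖ := by rw [norm_smul, Real.norm_of_nonneg hq]
    _ ≤ |p - q| * ‖b‖ + ‖q • a - p • b‖ := by
        rw [hsplit, abs_sub_comm, ← Real.norm_eq_abs, ← norm_smul]; exact norm_sub_le _ _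
    _ = _ := add_comm _ _

lemma enorm2_eq_norm {n : ℕ} (v : Fin n → ℝ) : enorm2 v = ‖WithLp.toLp 2 v‖ := by
  simp [enorm2, EuclideanSpace.norm_eq, dotProduct, sq]

lemma enorm2_smul {n : ℕ} (c : ℝ) (v : Fin n → ℝ) : enorm2 (c • v) = |c| * enorm2 v := by
  simp only [enorm2_eq_norm, WithLp.toLp_smul, norm_smul, Real.norm_eq_abs]

lemma dotProduct_self_nonneg {ι : Type*} [Fintype ι] (v : ι → ℝ) : 0 ≤ v ⬝ᵥ v := by
  simpa using dotProduct_self_star_nonneg v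

lemma dotProduct_snoc_self {n : ℕ} (v : Fin n → ℝ) (t : ℝ) :
    Fin.snoc (α := fun _ => ℝ) v t ⬝ᵥ Fin.snoc (α := fun _ => ℝ) v t = v ⬝ᵥ v + t * t := by
  simp [dotProduct, Fin.sum_univ_castSucc]

lemma enorm2_le_enorm2_snoc {n : ℕ} (v : Fin n → ℝ) (t : ℝ) :
    enorm2 v ≤ enorm2 (Fin.snoc (α := fun _ => ℝ) v t) := by
  unfold enorm2
  rw [dotProduct_snoc_self]
  exact Real.sqrt_le_sqrt (by nlinarith)

lemma abs_le_enorm2_snoc {n : ℕ} (v : Fin n → ℝ) (t : ℝ) :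
    |t| ≤ enorm2 (Fin.snoc (α := fun _ => ℝ) v t) := by
  unfold enorm2
  rw [dotProduct_snoc_self]
  exact Real.abs_le_sqrt (by nlinarith [dotProduct_self_nonneg v])

lemma Q2_pos (a : Fin 2 → ℝ) : 0 < Q2 a :=
  Real.sqrt_pos_of_pos (by linarith [dotProduct_self_nonneg a])

lemma smul_nuv_sub_nuv (a b : Fin 2 → ℝ) :
    (Q2 a * Q2 b) • (nuv b - nuv a) =
      Fin.snoc (α := fun _ => ℝ) (Q2 b • a - Q2 a • b) (Q2 a - Q2 b) := by
  have ha := (Q2_pos a).ne'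
  have hb := (Q2_pos b).ne'
  ext i
  fin_cases i <;> simp [nuv, Fin.snoc] <;> field_simp <;> ring

/-- `|b − a| ≤ (1 + |b|) Q(a) |ν(b) − ν(a)|`. -/
theorem grad_diff_le_normal_diff (a b : Fin 2 → ℝ) :
    enorm2 (b - a) ≤ (1 + enorm2 b) * Q2 a * enorm2 (nuv b - nuv a) := by
  have hQ := mul_pos (Q2_pos a) (Q2_pos b)
  have hS : enorm2 (Fin.snoc (α := fun _ => ℝ) (Q2 b • a - Q2 a • b) (Q2 a - Q2 b)) =
      Q2 a * Q2 b * enorm2 (nuv b - nuv a) := by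
    rw [← smul_nuv_sub_nuv, enorm2_smul, abs_of_pos hQ]
  have key : Q2 b * enorm2 (b - a) ≤ Q2 b * ((1 + enorm2 b) * Q2 a * enorm2 (nuv b - nuv a)) :=
    calc Q2 b * enorm2 (b - a)
        ≤ enorm2 (Q2 b • a - Q2 a • b) + |Q2 a - Q2 b| * enorm2 b := by
          simpa only [enorm2_eq_norm, WithLp.toLp_sub, WithLp.toLp_smul]
            using norm_smul_sub_add_le (WithLp.toLp 2 a) (WithLp.toLp 2 b) (Q2 a) (Q2_pos b).le
      _ ≤ Q2 a * Q2 b * enorm2 (nuv b - nuv a) * (1 + enorm2 b) := by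
          rw [← hS, mul_one_add]
          exact add_le_add (enorm2_le_enorm2_snoc _ _)
            (mul_le_mul_of_nonneg_right (abs_le_enorm2_snoc _ _) (Real.sqrt_nonneg _))
      _ = _ := by ring
  exact le_of_mul_le_mul_left key (Q2_pos b)
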